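/- Let S be a subspace of B(H₁,H₂) and let P, Q be orthogonal projections such that Q S P ⊆ S (where Q S P = {QAP : A ∈ S}). Then, viewing Q S P as a subspace of B(PH₁, QH₂), its hyperreflexivity constant satisfies κ_{QSP} ≤ κ_S. -/

import Mathlib

set_option linter.unusedSectionVars false

noncomputable def opdist {H₁ H₂ : Type*} [NormedAddCommGroup H₁] [InnerProductSpace ℂ H₁]
    [NormedAddCommGroup H₂] [InnerProductSpace ℂ H₂]
    (T : H₁ →L[ℂ] H₂) (S : Submodule ℂ (H₁ →L[ℂ] H₂)) : ℝ :=
  Metric.infDist T (S : Set (H₁ →L[ℂ] H₂))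

noncomputable def beta {H₁ H₂ : Type*} [NormedAddCommGroup H₁] [InnerProductSpace ℂ H₁]
    [NormedAddCommGroup H₂] [InnerProductSpace ℂ H₂]
    (S : Submodule ℂ (H₁ →L[ℂ] H₂)) (T : H₁ →L[ℂ] H₂) : ℝ :=
  ⨆ x : {x : H₁ // ‖x‖ = 1},
    Metric.infDist (T x.1)
      (closure ((fun A : H₁ →L[ℂ] H₂ => A x.1) '' (S : Set (H₁ →L[ℂ] H₂))))

/-- Compression of an operator to `B(K, L)`, `T ↦ Q_L T|_K`, as a linear map. -/
noncomputable def compressL {H₁ H₂ : Type*} [NormedAddCommGroup H₁] [InnerProductSpace ℂ H₁]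
    [NormedAddCommGroup H₂] [InnerProductSpace ℂ H₂]
    (K : Submodule ℂ H₁) (L : Submodule ℂ H₂) [CompleteSpace L] :
    (H₁ →L[ℂ] H₂) →ₗ[ℂ] (K →L[ℂ] L) where
  toFun T := (Submodule.orthogonalProjection L).comp (T.comp K.subtypeL)
  map_add' T U := by ext x; simp
  map_smul' c T := by ext x; simp

lemma my_le_infDist {α : Type*} [PseudoMetricSpace α] {s : Set α} (hs : s.Nonempty)
    {x : α} {b : ℝ} (h : ∀ y ∈ s, b ≤ dist x y) : b ≤ Metric.infDist x s := by
  rw [Metric.infDist_eq_iInf]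
  haveI := hs.to_subtype
  exact le_ciInf fun y => h y y.2

section Aux

variable {H₁ H₂ : Type*}
    [NormedAddCommGroup H₁] [InnerProductSpace ℂ H₁] [CompleteSpace H₁]
    [NormedAddCommGroup H₂] [InnerProductSpace ℂ H₂] [CompleteSpace H₂]
    (K : Submodule ℂ H₁) (L : Submodule ℂ H₂) [CompleteSpace K] [CompleteSpace L]

noncomputable def liftL (T : K →L[ℂ] L) : H₁ →L[ℂ] H₂ :=
  L.subtypeL.comp (T.comp (Submodule.orthogonalProjection K))

lemma compressL_apply (A : H₁ →L[ℂ] H₂) (x : K) :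
    compressL K L A x = Submodule.orthogonalProjection L (A x) := rfl

lemma liftL_apply (T : K →L[ℂ] L) (x : H₁) :
    liftL K L T x = (T (Submodule.orthogonalProjection K x) : H₂) := rfl

lemma compress_lift (T : K →L[ℂ] L) : compressL K L (liftL K L T) = T := by
  ext x
  simp [compressL_apply, liftL_apply, Submodule.orthogonalProjection_mem_subspace_eq_self]

lemma norm_proj_le (v : H₂) : ‖Submodule.orthogonalProjection L v‖ ≤ ‖v‖ :=
  ((Submodule.orthogonalProjection L).le_opNorm v).trans
    (by nlinarith [Submodule.orthogonalProjectionOnto_norm_le L, norm_nonneg v])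

lemma norm_compress_le (A : H₁ →L[ℂ] H₂) : ‖compressL K L A‖ ≤ ‖A‖ := by
  refine ContinuousLinearMap.opNorm_le_bound _ (norm_nonneg A) fun x => ?_
  calc ‖compressL K L A x‖ ≤ ‖A (x : H₁)‖ := norm_proj_le L _
    _ ≤ ‖A‖ * ‖x‖ := (A.le_opNorm _).trans (by simp)

variable (S : Submodule ℂ (H₁ →L[ℂ] H₂))

lemma beta_nonneg (T : H₁ →L[ℂ] H₂) : 0 ≤ beta S T :=
  Real.iSup_nonneg fun _ => Metric.infDist_nonneg

lemma beta_bddAbove (T : H₁ →L[ℂ] H₂) :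
    BddAbove (Set.range fun x : {x : H₁ // ‖x‖ = 1} =>
      Metric.infDist (T x.1)
        (closure ((fun A : H₁ →L[ℂ] H₂ => A x.1) '' (S : Set (H₁ →L[ℂ] H₂))))) := by
  refine ⟨‖T‖, ?_⟩
  rintro _ ⟨x, rfl⟩
  have h0 : (0 : H₂) ∈ closure ((fun A : H₁ →L[ℂ] H₂ => A x.1) '' (S : Set (H₁ →L[ℂ] H₂))) :=
    subset_closure ⟨0, S.zero_mem, by simp⟩
  calc Metric.infDist (T x.1) _ ≤ dist (T x.1) 0 := Metric.infDist_le_dist_of_mem h0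
    _ = ‖T x.1‖ := dist_zero_right _
    _ ≤ ‖T‖ * ‖x.1‖ := T.le_opNorm _
    _ = ‖T‖ := by rw [x.2, mul_one]

lemma hx_of_K {y : K} (hy : ‖y‖ = 1) : ‖(y : H₁)‖ = 1 := hy

/-- `β_{QSP}(T) ≤ β_S(T̃)`. -/
lemma beta_le₁ (T : K →L[ℂ] L) :
    beta (S.map (compressL K L)) T ≤ beta S (liftL K L T) := by
  refine Real.iSup_le (fun y => ?_) (beta_nonneg S _)
  have hx : ‖((y.1 : K) : H₁)‖ = 1 := y.2
  refine le_trans ?_ (le_ciSup (beta_bddAbove S (liftL K L T)) ⟨(y.1 : H₁), hx⟩)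
  rw [Metric.infDist_closure, Metric.infDist_closure]
  refine my_le_infDist ?_ ?_
  · exact ⟨_, ⟨0, S.zero_mem, rfl⟩⟩
  · rintro _ ⟨A, hA, rfl⟩
    refine le_trans (Metric.infDist_le_dist_of_mem
      ⟨compressL K L A, Submodule.mem_map_of_mem hA, rfl⟩) ?_
    show dist (T y.1) (compressL K L A y.1) ≤ dist (liftL K L T (y.1 : H₁)) (A (y.1 : H₁))
    rw [dist_eq_norm, dist_eq_norm]
    have h1 : liftL K L T (y.1 : H₁) = ((T y.1 : L) : H₂) := by
      rw [liftL_apply, Submodule.orthogonalProjection_mem_subspace_eq_self]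
    have h2 : (T y.1 : H₂) - A (y.1 : H₁)
        = liftL K L T (y.1 : H₁) - A (y.1 : H₁) := by rw [h1]
    have h3 : T y.1 - compressL K L A y.1
        = Submodule.orthogonalProjection L (liftL K L T (y.1 : H₁) - A (y.1 : H₁)) := by
      rw [map_sub, compressL_apply, h1, Submodule.orthogonalProjection_mem_subspace_eq_self]
    calc ‖T y.1 - compressL K L A y.1‖
        = ‖Submodule.orthogonalProjection L (liftL K L T (y.1 : H₁) - A (y.1 : H₁))‖ := by rw [h3]
      _ ≤ ‖liftL K L T (y.1 : H₁) - A (y.1 : H₁)‖ := norm_proj_le L _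

end Aux

section Aux2

variable {H₁ H₂ : Type*}
    [NormedAddCommGroup H₁] [InnerProductSpace ℂ H₁] [CompleteSpace H₁]
    [NormedAddCommGroup H₂] [InnerProductSpace ℂ H₂] [CompleteSpace H₂]
    (K : Submodule ℂ H₁) (L : Submodule ℂ H₂) [CompleteSpace K] [CompleteSpace L]
    (S : Submodule ℂ (H₁ →L[ℂ] H₂))

/-- `β_S(T̃) ≤ β_{QSP}(T)`. -/
lemma beta_le₂ (hQSP : ∀ A ∈ S,
      (L.subtypeL.comp (Submodule.orthogonalProjection L)).comp
        (A.comp (K.subtypeL.comp (Submodule.orthogonalProjection K))) ∈ S)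
    (T : K →L[ℂ] L) :
    beta S (liftL K L T) ≤ beta (S.map (compressL K L)) T := by
  refine Real.iSup_le (fun x => ?_) (beta_nonneg _ _)
  set px : K := Submodule.orthogonalProjection K x.1 with hpx
  by_cases h0 : px = 0
  · -- the compression of x is zero, so T̃ x = 0 which is approximated by 0 ∈ S
    have hmem : (0 : H₂) ∈ closure ((fun A : H₁ →L[ℂ] H₂ => A x.1) '' (S : Set (H₁ →L[ℂ] H₂))) :=
      subset_closure ⟨0, S.zero_mem, by simp⟩
    refine le_trans (le_trans (Metric.infDist_le_dist_of_mem hmem) ?_)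
      (beta_nonneg (S.map (compressL K L)) T)
    rw [dist_zero_right, liftL_apply, ← hpx, h0]
    simp
  · -- normalize: y = px / ‖px‖ is a unit vector of K
    have hr : (0 : ℝ) < ‖px‖ := norm_pos_iff.2 h0
    set y : K := ((‖px‖ : ℂ))⁻¹ • px with hy
    have hy1 : ‖y‖ = 1 := by
      rw [hy, norm_smul, norm_inv]
      have h1 : ‖((‖px‖ : ℂ))‖ = ‖px‖ := by
        simp [abs_of_nonneg hr.le]
      rw [h1, inv_mul_cancel₀ hr.ne']
    have hry : (‖px‖ : ℂ) • y = px := by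
      rw [hy, smul_inv_smul₀]
      exact_mod_cast hr.ne'
    refine le_trans ?_ (le_ciSup (beta_bddAbove (S.map (compressL K L)) T) ⟨y, hy1⟩)
    rw [Metric.infDist_closure, Metric.infDist_closure]
    refine my_le_infDist ?_ ?_
    · exact ⟨_, ⟨0, Submodule.zero_mem _, rfl⟩⟩
    rintro _ ⟨B, hB, rfl⟩
    obtain ⟨A, hA, rfl⟩ := hB
    set A' := (L.subtypeL.comp (Submodule.orthogonalProjection L)).comp
        (A.comp (K.subtypeL.comp (Submodule.orthogonalProjection K))) with hA'
    refine le_trans (Metric.infDist_le_dist_of_mem ⟨A', hQSP A hA, rfl⟩) ?_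
    show dist (liftL K L T x.1) (A' x.1) ≤ dist (T y) (compressL K L A y)
    rw [dist_eq_norm, dist_eq_norm]
    have e1 : liftL K L T x.1 - A' x.1 = ((T px - compressL K L A px : L) : H₂) := by
      simp [liftL_apply, hA', compressL_apply, hpx, ContinuousLinearMap.comp_apply]
    have e2 : T px - compressL K L A px = (‖px‖ : ℂ) • (T y - compressL K L A y) := by
      rw [smul_sub, ← map_smul, ← map_smul, hry]
    calc ‖liftL K L T x.1 - A' x.1‖ = ‖T px - compressL K L A px‖ := by
          rw [e1, ← Submodule.coe_norm]
      _ = ‖px‖ * ‖T y - compressL K L A y‖ := by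
          rw [e2, norm_smul]; simp
      _ ≤ 1 * ‖T y - compressL K L A y‖ := by
          have : ‖px‖ ≤ 1 := by
            calc ‖px‖ ≤ ‖(Submodule.orthogonalProjection K : H₁ →L[ℂ] K)‖ * ‖x.1‖ :=
                  (Submodule.orthogonalProjection K).le_opNorm _
              _ ≤ 1 * 1 := by
                  refine mul_le_mul (Submodule.orthogonalProjectionOnto_norm_le K) (le_of_eq x.2)
                    (norm_nonneg _) zero_le_one
              _ = 1 := one_mul 1
          exact mul_le_mul_of_nonneg_right this (norm_nonneg _)
      _ = ‖T y - compressL K L A y‖ := one_mul _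

end Aux2

section Main

variable {H₁ H₂ : Type*}
    [NormedAddCommGroup H₁] [InnerProductSpace ℂ H₁] [CompleteSpace H₁]
    [NormedAddCommGroup H₂] [InnerProductSpace ℂ H₂] [CompleteSpace H₂]
    (K : Submodule ℂ H₁) (L : Submodule ℂ H₂) [CompleteSpace K] [CompleteSpace L]
    (S : Submodule ℂ (H₁ →L[ℂ] H₂))

lemma opdist_compress_le (T : K →L[ℂ] L) :
    opdist T (S.map (compressL K L)) ≤ opdist (liftL K L T) S := by
  unfold opdist
  refine my_le_infDist ?_ ?_
  · exact ⟨0, S.zero_mem⟩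
  intro A hA
  refine le_trans (Metric.infDist_le_dist_of_mem
    ⟨A, hA, rfl⟩ (x := T)) ?_
  rw [dist_eq_norm T, dist_eq_norm (liftL K L T)]
  calc ‖T - compressL K L A‖ = ‖compressL K L (liftL K L T - A)‖ := by
        rw [map_sub, compress_lift]
    _ ≤ ‖liftL K L T - A‖ := norm_compress_le K L _

end Main

/-- If `Q S P ⊆ S`, then the compression `Q S P ⊆ B(PH₁, QH₂)` has
hyperreflexivity constant at most that of `S`: every hyperreflexivity constant
for `S` is one for `Q S P`. -/
theorem kappa_compression_le {H₁ H₂ : Type*}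
    [NormedAddCommGroup H₁] [InnerProductSpace ℂ H₁] [CompleteSpace H₁]
    [NormedAddCommGroup H₂] [InnerProductSpace ℂ H₂] [CompleteSpace H₂]
    (S : Submodule ℂ (H₁ →L[ℂ] H₂)) (K : Submodule ℂ H₁) (L : Submodule ℂ H₂)
    [CompleteSpace K] [CompleteSpace L]
    (hQSP : ∀ A ∈ S,
      (L.subtypeL.comp (Submodule.orthogonalProjection L)).comp
        (A.comp (K.subtypeL.comp (Submodule.orthogonalProjection K))) ∈ S)
    (C : ℝ) (hC : ∀ T : H₁ →L[ℂ] H₂, opdist T S ≤ C * beta S T) :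
    ∀ T : (K →L[ℂ] L),
      opdist T (S.map (compressL K L)) ≤ C * beta (S.map (compressL K L)) T := by
  intro T
  have hbeta : beta S (liftL K L T) = beta (S.map (compressL K L)) T :=
    le_antisymm (beta_le₂ K L S hQSP T) (beta_le₁ K L S T)
  calc opdist T (S.map (compressL K L)) ≤ opdist (liftL K L T) S :=
        opdist_compress_le K L S T
    _ ≤ C * beta S (liftL K L T) := hC _
    _ = C * beta (S.map (compressL K L)) T := by rw [hbeta]
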